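/- The semigroup 𝒵^∞(S³ × S⁷ × S¹¹) is nontrivial: if α : S¹⁴ → S³ is an essential map of order 7 (a generator of the 7-primary component π₁₄(S³)_{(7)} ≅ ℤ/7), then the composite S³ × S⁷ × S¹¹ → S³ × S¹¹ → S¹⁴ → S³ → S³ × S⁷ × S¹¹ (first the projection forgetting the S⁷ factor, then the smash projection S³ × S¹¹ → S³ ∧ S¹¹ ≃ S¹⁴, then α, then the inclusion of the S³ factor) is essential and induces the trivial homomorphism on all homotopy groups. -/

import Mathlib

open scoped Manifold TensorProduct

noncomputable section

/-! ### Pointed spaces and based maps -/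

/-- A pointed topological space. -/
structure PtSpace : Type 1 where
  /-- underlying type -/
  carrier : Type
  [top : TopologicalSpace carrier]
  /-- base point -/
  pt : carrier

attribute [instance] PtSpace.top

instance : CoeSort PtSpace Type := ⟨PtSpace.carrier⟩

/-- The pointed space on a type with a chosen base point. -/
@[reducible] def PtSpace.of (G : Type) [TopologicalSpace G] (g : G) : PtSpace :=
  { carrier := G, pt := g }

/-- A based (pointed) continuous map. -/
@[ext] structure PtMap (X Y : PtSpace) where
  toCM : C(X, Y)
  map_pt : toCM X.pt = Y.pt

instance (X Y : PtSpace) : FunLike (PtMap X Y) X Y where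
  coe f := f.toCM
  coe_injective f g h := by cases f; cases g; simp_all [ContinuousMap.ext_iff, funext_iff]

namespace PtMap

/-- identity -/
def id (X : PtSpace) : PtMap X X := ⟨ContinuousMap.id _, rfl⟩

/-- composition of based maps -/
def comp {X Y Z : PtSpace} (g : PtMap Y Z) (f : PtMap X Y) : PtMap X Z :=
  ⟨g.toCM.comp f.toCM, by simp [f.map_pt, g.map_pt]⟩

/-- the constant based map -/
def const (X Y : PtSpace) : PtMap X Y := ⟨ContinuousMap.const _ Y.pt, rfl⟩

end PtMap

/-- Based homotopy: homotopy relative to the base point. -/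
def PtHomotopic {X Y : PtSpace} (f g : PtMap X Y) : Prop :=
  ContinuousMap.HomotopicRel f.toCM g.toCM {X.pt}

theorem PtHomotopic.refl {X Y : PtSpace} (f : PtMap X Y) : PtHomotopic f f :=
  ContinuousMap.HomotopicRel.refl _

theorem PtHomotopic.symm {X Y : PtSpace} {f g : PtMap X Y} (h : PtHomotopic f g) :
    PtHomotopic g f := ContinuousMap.HomotopicRel.symm h

theorem PtHomotopic.trans {X Y : PtSpace} {f g k : PtMap X Y} (h : PtHomotopic f g)
    (h' : PtHomotopic g k) : PtHomotopic f k := ContinuousMap.HomotopicRel.trans h h'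

/-- A based map is nullhomotopic if it is based homotopic to the constant map. -/
def PtNullhomotopic {X Y : PtSpace} (f : PtMap X Y) : Prop :=
  PtHomotopic f (PtMap.const X Y)

/-- The `n`-sphere as a pointed space. -/
def pSphere (n : ℕ) : PtSpace :=
  { carrier := Metric.sphere (0 : EuclideanSpace ℝ (Fin (n + 1))) 1
    pt := ⟨EuclideanSpace.single 0 1, by simp [EuclideanSpace.norm_single]⟩ }

/-! ### The semigroups `𝒵ⁿ(X,Y)` and their nilpotency -/

/-- `f ∈ 𝒵ⁿ(X, Y)` : `f` induces the trivial homomorphism on homotopy groups `π_i`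
for all `1 ≤ i ≤ n`, expressed by the condition that `f ∘ g` is (based) nullhomotopic
for every based map `g : Sⁱ → X`. -/
def zClass (n : ℕ∞) {X Y : PtSpace} (f : PtMap X Y) : Prop :=
  ∀ i : ℕ, 1 ≤ i → (i : ℕ∞) ≤ n → ∀ g : PtMap (pSphere i) X, PtNullhomotopic (f.comp g)

/-- The semigroup `𝒵ⁿ(X)` (as a set of based self-maps; the semigroup operation is
composition, which is compatible with `compList` below). -/
def ZSet (n : ℕ∞) (X : PtSpace) : Set (PtMap X X) := {f | zClass n f}

/-- iterated composite of a list of self-maps -/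
def compList {X : PtSpace} : List (PtMap X X) → PtMap X X
  | [] => PtMap.id X
  | f :: l => f.comp (compList l)

/-- The set of `t ≥ 1` such that every composite of `t` elements of `𝒵ⁿ(X)` is
nullhomotopic. -/
def nilSet (n : ℕ∞) (X : PtSpace) : Set ℕ :=
  {t | 1 ≤ t ∧ ∀ l : List (PtMap X X), l.length = t →
    (∀ f ∈ l, f ∈ ZSet n X) → PtNullhomotopic (compList l)}

/-- The nilpotency of the semigroup `𝒵ⁿ(X)`: the least `t ≥ 1` such that all composites
of `t` elements of `𝒵ⁿ(X)` are nullhomotopic (`⊤` if there is no such `t`).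
`tNil n X` for `n = dim X` is `t(X)`, and `tNil ⊤ X` is `t_∞(X)`. -/
def tNil (n : ℕ∞) (X : PtSpace) : ℕ∞ :=
  sInf ((Nat.cast : ℕ → ℕ∞) '' nilSet n X)

/-! ### Homotopy classes -/

/-- based homotopy as a setoid -/
def ptSetoid (X Y : PtSpace) : Setoid (PtMap X Y) where
  r := PtHomotopic
  iseqv := ⟨PtHomotopic.refl, PtHomotopic.symm, PtHomotopic.trans⟩

/-- `[X, Y]`, the set of based homotopy classes of based maps `X → Y`. -/
def PtCls (X Y : PtSpace) : Type := Quotient (ptSetoid X Y)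

/-- the homotopy class of a based map -/
def PtMap.cls {X Y : PtSpace} (f : PtMap X Y) : PtCls X Y := Quotient.mk (ptSetoid X Y) f

/-- `𝒵ⁿ(X)` as a set of homotopy classes. -/
def ZCls (n : ℕ∞) (X : PtSpace) : Set (PtCls X X) := PtMap.cls '' ZSet n X

/-- Right whiskering of a based homotopy. -/
theorem PtHomotopic.compRight {X Y Z : PtSpace} {f g : PtMap Y Z} (h : PtHomotopic f g)
    (q : PtMap X Y) : PtHomotopic (f.comp q) (g.comp q) := by
  obtain ⟨H⟩ := h
  exact ⟨{ toFun := fun p => H (p.1, q.toCM p.2)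
           continuous_toFun := H.continuous.comp
             (continuous_fst.prodMk (q.toCM.continuous.comp continuous_snd))
           map_zero_left := fun x => by simp [PtMap.comp]
           map_one_left := fun x => by simp [PtMap.comp]
           prop' := fun t x hx => by
             have hx' : x = X.pt := hx
             subst hx'
             show H (t, q.toCM X.pt) = (f.comp q).toCM X.pt
             rw [q.map_pt]
             show H (t, Y.pt) = f.toCM (q.toCM X.pt)
             rw [q.map_pt]
             exact H.eq_fst t rfl }⟩

/-- Left whiskering of a based homotopy. -/
theorem PtHomotopic.compLeft {X Y Z : PtSpace} {f g : PtMap X Y} (h : PtHomotopic f g)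
    (p : PtMap Y Z) : PtHomotopic (p.comp f) (p.comp g) :=
  h.map fun H => H.compContinuousMap p.toCM

/-- precomposition on homotopy classes, `q^* : [Y, Z] → [X, Z]` -/
def PtCls.precomp {X Y : PtSpace} (q : PtMap X Y) {Z : PtSpace} :
    PtCls Y Z → PtCls X Z :=
  Quotient.map (fun f => f.comp q) (fun _ _ h => h.compRight q)

/-- postcomposition on homotopy classes, `p_* : [X, Y] → [X, Z]` -/
def PtCls.postcomp {Y Z : PtSpace} (p : PtMap Y Z) {X : PtSpace} :
    PtCls X Y → PtCls X Z :=
  Quotient.map (fun f => p.comp f) (fun _ _ h => h.compLeft p)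


/-! ### Further constructions on pointed spaces -/

/-- product of pointed spaces -/
def PtSpace.prod (X Y : PtSpace) : PtSpace :=
  { carrier := X.carrier × Y.carrier, pt := (X.pt, Y.pt) }

/-- the space obtained from `X` by collapsing a subset `A` to a point -/
def PtSpace.collapse (X : PtSpace) (A : Set X.carrier) : PtSpace :=
  { carrier := Quot (fun a b : X.carrier => a ∈ A ∧ b ∈ A)
    pt := Quot.mk _ X.pt }

/-- the collapsing map `X → X/A` -/
def PtSpace.collapseMap (X : PtSpace) (A : Set X.carrier) : PtMap X (X.collapse A) :=
  ⟨⟨Quot.mk _, continuous_quot_mk⟩, rfl⟩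

/-- the wedge `X ∨ Y` -/
def ptWedge (X Y : PtSpace) : PtSpace :=
  { carrier := Quot (fun a b : X.carrier ⊕ Y.carrier =>
      (a = Sum.inl X.pt ∨ a = Sum.inr Y.pt) ∧ (b = Sum.inl X.pt ∨ b = Sum.inr Y.pt))
    pt := Quot.mk _ (Sum.inl X.pt) }

/-- projection of the wedge onto its first factor -/
def ptWedgeProjLeft (X Y : PtSpace) : PtMap (ptWedge X Y) X :=
  ⟨⟨Quot.lift (Sum.elim id fun _ => X.pt) (by
      rintro a b ⟨ha, hb⟩
      rcases ha with rfl | rfl <;> rcases hb with rfl | rfl <;> rfl),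
    continuous_quot_lift _ (Continuous.sumElim continuous_id continuous_const)⟩, rfl⟩

/-- the smash product `X ∧ Y`, the quotient of `X × Y` by the wedge -/
def ptSmash (X Y : PtSpace) : PtSpace :=
  { carrier := Quot (fun a b : X.carrier × Y.carrier =>
      (a.1 = X.pt ∨ a.2 = Y.pt) ∧ (b.1 = X.pt ∨ b.2 = Y.pt))
    pt := Quot.mk _ (X.pt, Y.pt) }

/-- the projection `X × Y → X ∧ Y` -/
def ptSmashProj (X Y : PtSpace) : PtMap (X.prod Y) (ptSmash X Y) :=
  ⟨⟨Quot.mk _, continuous_quot_mk⟩, rfl⟩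

/-- the reduced suspension `ΣX` -/
def ptSusp (X : PtSpace) : PtSpace :=
  { carrier := Quot (fun a b : X.carrier × unitInterval =>
      (a.2 = 0 ∨ a.2 = 1 ∨ a.1 = X.pt) ∧ (b.2 = 0 ∨ b.2 = 1 ∨ b.1 = X.pt))
    pt := Quot.mk _ (X.pt, 0) }

/-- the reduced mapping cone of `f : A → B` -/
def ptCone {A B : PtSpace} (f : PtMap A B) : PtSpace :=
  { carrier := Quot (fun x y : (A.carrier × unitInterval) ⊕ B.carrier =>
      (∃ a : A.carrier, x = Sum.inl (a, 1) ∧ y = Sum.inr (f.toCM a)) ∨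
      ((∃ a t, x = Sum.inl (a, t) ∧ (t = 0 ∨ a = A.pt)) ∧
        ∃ a t, y = Sum.inl (a, t) ∧ (t = 0 ∨ a = A.pt)))
    pt := Quot.mk _ (Sum.inr B.pt) }

/-- `f : X → Y` is a based homotopy equivalence -/
def IsPtHomotopyEquiv {X Y : PtSpace} (f : PtMap X Y) : Prop :=
  ∃ g : PtMap Y X, PtHomotopic (g.comp f) (PtMap.id X) ∧ PtHomotopic (f.comp g) (PtMap.id Y)

/-- `X` and `Y` are based homotopy equivalent -/
def PtHomotopyEquiv (X Y : PtSpace) : Prop :=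
  ∃ f : PtMap X Y, IsPtHomotopyEquiv f

/-! ### Pointwise group structure on `[X, G]` for a topological group `G` -/

section PtGrp

variable {X : PtSpace} {G : Type} [TopologicalSpace G] [Group G] [IsTopologicalGroup G]

/-- pointwise product of based maps into a topological group (based at the identity) -/
def PtMap.mul (f g : PtMap X (PtSpace.of G 1)) : PtMap X (PtSpace.of G 1) :=
  ⟨⟨fun x => f.toCM x * g.toCM x, f.toCM.continuous.mul g.toCM.continuous⟩, by
    show f.toCM X.pt * g.toCM X.pt = 1
    rw [f.map_pt, g.map_pt]; exact mul_one 1⟩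

/-- pointwise inverse -/
def PtMap.inv (f : PtMap X (PtSpace.of G 1)) : PtMap X (PtSpace.of G 1) :=
  ⟨⟨fun x => (f.toCM x)⁻¹, f.toCM.continuous.inv⟩, by
    show (f.toCM X.pt)⁻¹ = 1
    rw [f.map_pt]; exact inv_one⟩

/-- pointwise power -/
def PtMap.npow (f : PtMap X (PtSpace.of G 1)) (k : ℕ) : PtMap X (PtSpace.of G 1) :=
  ⟨⟨fun x => (f.toCM x) ^ k, f.toCM.continuous.pow k⟩, by
    show (f.toCM X.pt) ^ k = 1
    rw [f.map_pt]; exact one_pow k⟩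

theorem PtHomotopic.mul {f f' g g' : PtMap X (PtSpace.of G 1)} (h₁ : PtHomotopic f f')
    (h₂ : PtHomotopic g g') : PtHomotopic (f.mul g) (f'.mul g') := by
  obtain ⟨H₁⟩ := h₁; obtain ⟨H₂⟩ := h₂
  exact ⟨{ toFun := fun p => H₁ p * H₂ p
           continuous_toFun := H₁.continuous.mul H₂.continuous
           map_zero_left := fun x => by simp [PtMap.mul]
           map_one_left := fun x => by simp [PtMap.mul]
           prop' := fun t x hx => by
             have hx' : x = X.pt := hx
             subst hx'
             show H₁ (t, X.pt) * H₂ (t, X.pt) = (f.mul g).toCM X.pt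
             rw [H₁.eq_fst t rfl, H₂.eq_fst t rfl]; rfl }⟩

theorem PtHomotopic.inv {f f' : PtMap X (PtSpace.of G 1)} (h : PtHomotopic f f') :
    PtHomotopic f.inv f'.inv := by
  obtain ⟨H⟩ := h
  exact ⟨{ toFun := fun p => (H p)⁻¹
           continuous_toFun := H.continuous.inv
           map_zero_left := fun x => by simp [PtMap.inv]
           map_one_left := fun x => by simp [PtMap.inv]
           prop' := fun t x hx => by
             have hx' : x = X.pt := hx
             subst hx'
             show (H (t, X.pt))⁻¹ = f.inv.toCM X.pt
             rw [H.eq_fst t rfl]; rfl }⟩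

instance : Mul (PtCls X (PtSpace.of G 1)) :=
  ⟨Quotient.map₂ PtMap.mul fun _ _ h₁ _ _ h₂ => h₁.mul h₂⟩

instance : One (PtCls X (PtSpace.of G 1)) := ⟨(PtMap.const X (PtSpace.of G 1)).cls⟩

instance : Inv (PtCls X (PtSpace.of G 1)) :=
  ⟨Quotient.map PtMap.inv fun _ _ h => h.inv⟩

/-- `[X, G]` is a group under pointwise multiplication. -/
instance : Group (PtCls X (PtSpace.of G 1)) where
  mul_assoc a b c := by
    induction a using Quotient.inductionOn with | _ a =>
    induction b using Quotient.inductionOn with | _ b =>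
    induction c using Quotient.inductionOn with | _ c =>
    exact congrArg (Quotient.mk _) (by
      apply PtMap.ext; exact ContinuousMap.ext fun x => mul_assoc _ _ _)
  one_mul a := by
    induction a using Quotient.inductionOn with | _ a =>
    exact congrArg (Quotient.mk _) (by
      apply PtMap.ext; exact ContinuousMap.ext fun x => one_mul _)
  mul_one a := by
    induction a using Quotient.inductionOn with | _ a =>
    exact congrArg (Quotient.mk _) (by
      apply PtMap.ext; exact ContinuousMap.ext fun x => mul_one _)
  inv_mul_cancel a := by
    induction a using Quotient.inductionOn with | _ a =>
    exact congrArg (Quotient.mk _) (by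
      apply PtMap.ext; exact ContinuousMap.ext fun x => inv_mul_cancel _)

end PtGrp

/-! ### Finite CW structures -/

/-- A finite CW presentation of a space: finitely many cells with characteristic maps,
whose open cells partition the space, each cell boundary landing in cells of strictly
smaller dimension. Together with compactness and Hausdorffness (see `IsFiniteCW`)
this is exactly the classical notion of a finite CW complex. -/
structure FiniteCWPres (X : PtSpace) where
  ι : Type
  [fin : Finite ι]
  cdim : ι → ℕ
  char : ∀ j, C(Metric.closedBall (0 : EuclideanSpace ℝ (Fin (cdim j))) 1, X.carrier)
  injOn : ∀ j, Set.InjOn (char j) {v | ‖(v : EuclideanSpace ℝ (Fin (cdim j)))‖ < 1}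
  disjoint : ∀ j k, j ≠ k → Disjoint
    (char j '' {v | ‖(v : EuclideanSpace ℝ (Fin (cdim j)))‖ < 1})
    (char k '' {v | ‖(v : EuclideanSpace ℝ (Fin (cdim k)))‖ < 1})
  cover : ∀ x : X.carrier, ∃ j, ∃ v : Metric.closedBall (0 : EuclideanSpace ℝ (Fin (cdim j))) 1,
    ‖(v : EuclideanSpace ℝ (Fin (cdim j)))‖ < 1 ∧ char j v = x
  boundary : ∀ j, ∀ v : Metric.closedBall (0 : EuclideanSpace ℝ (Fin (cdim j))) 1,
    ‖(v : EuclideanSpace ℝ (Fin (cdim j)))‖ = 1 →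
    ∃ k, ∃ w : Metric.closedBall (0 : EuclideanSpace ℝ (Fin (cdim k))) 1,
      cdim k < cdim j ∧ ‖(w : EuclideanSpace ℝ (Fin (cdim k)))‖ < 1 ∧ char k w = char j v

/-- `X` is a finite CW complex of dimension `d`. -/
def IsFiniteCW (X : PtSpace) (d : ℕ) : Prop :=
  CompactSpace X.carrier ∧ T2Space X.carrier ∧
    ∃ P : FiniteCWPres X, (∀ j, P.cdim j ≤ d) ∧ ∃ j, P.cdim j = d

/-! ### Nilpotent spaces -/

/-- Two homotopy classes in `π_n(X, x)` are freely related if they have representatives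
that are freely homotopic (i.e. homotopic through maps collapsing the cube boundary to a
single, possibly moving, point).  This holds for `a` and `b` iff `b = γ · a` for some `γ`
in the fundamental group, so it encodes the orbits of the `π₁`-action on `π_n`. -/
def FreelyRelated (n : ℕ) (X : Type) [TopologicalSpace X] (x : X)
    (A B : HomotopyGroup (Fin n) X x) : Prop :=
  ∃ p q : GenLoop (Fin n) X x,
    Quotient.mk (GenLoop.Homotopic.setoid (Fin n) x) p = A ∧
    Quotient.mk (GenLoop.Homotopic.setoid (Fin n) x) q = B ∧
    ∃ H : ContinuousMap.Homotopy p.1 q.1,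
      ∀ (t : unitInterval) y z, y ∈ Cube.boundary (Fin n) → z ∈ Cube.boundary (Fin n) →
        H (t, y) = H (t, z)

/-- The lower central series of the action of the fundamental group on `π_{n+2}(X, x)`:
`Γ⁰ = π_{n+2}` and `Γ^{k+1}` is generated by the elements `(γ · a) * a⁻¹` with `a ∈ Γᵏ`. -/
def actionLowerCentralSeries (n : ℕ) (X : Type) [TopologicalSpace X] (x : X) :
    ℕ → Subgroup (HomotopyGroup (Fin (n + 2)) X x)
  | 0 => ⊤
  | k + 1 => Subgroup.closure
      {g | ∃ a b, a ∈ actionLowerCentralSeries n X x k ∧ FreelyRelated (n + 2) X x a b ∧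
        g = b * a⁻¹}

/-- A nilpotent space: path-connected, with nilpotent fundamental group acting
nilpotently on all higher homotopy groups. -/
def IsNilpotentSpace (X : PtSpace) : Prop :=
  PathConnectedSpace X.carrier ∧
  Group.IsNilpotent (FundamentalGroup X.carrier X.pt) ∧
  ∀ n : ℕ, ∃ k, actionLowerCentralSeries n X.carrier X.pt k = ⊥

/-! ### Localization of spaces -/

/-- All homotopy groups of `Z` are `P`-local (`P` a set of primes): for every prime
`q ∉ P` the `q`-th power map on `π_n(Z)` is bijective. -/
def IsPLocalSpace (P : Set ℕ) (Z : PtSpace) : Prop :=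
  ∀ n : ℕ, ∀ q : ℕ, q.Prime → q ∉ P →
    Function.Bijective fun g : HomotopyGroup (Fin (n + 1)) Z.carrier Z.pt => g ^ q

/-- `e : X → Y` is a `P`-localization of `X` (`P` a set of primes): `Y` is `P`-local and
`e` is universal (up to homotopy) among based maps to `P`-local spaces.  For `P = {p}`
this is localization at the prime `p`; for `P = ∅` it is rationalization. -/
def IsPLocalization (P : Set ℕ) {X Y : PtSpace} (e : PtMap X Y) : Prop :=
  IsPLocalSpace P Y ∧
  ∀ Z : PtSpace, IsPLocalSpace P Z →
    (∀ g : PtMap X Z, ∃ h : PtMap Y Z, PtHomotopic (h.comp e) g) ∧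
    ∀ h h' : PtMap Y Z, PtHomotopic (h.comp e) (h'.comp e) → PtHomotopic h h'

/-! ### Misc notions -/

/-- `G` contains a torus of dimension `k` (a continuously and injectively embedded copy
of `(ℝ/ℤ)ᵏ`).  For a compact Lie group, the rank is the largest such `k`. -/
def HasTorus (G : Type) [TopologicalSpace G] [Group G] (k : ℕ) : Prop :=
  ∃ f : (Fin k → AddCircle (1 : ℝ)) → G,
    Continuous f ∧ Function.Injective f ∧ ∀ a b, f (a + b) = f a * f b

/-- `q : G → Sᴺ` is the pinch map onto the top cell: it collapses a proper closed subset
`C` (the lower skeleton) containing the base point to the base point of the sphere and is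
injective on the complement, an open `N`-cell, which maps onto the complement of the base
point. -/
def IsCellPinch {G : PtSpace} {N : ℕ} (q : PtMap G (pSphere N)) : Prop :=
  Topology.IsQuotientMap q.toCM ∧
  ∃ C : Set G.carrier, IsClosed C ∧ G.pt ∈ C ∧
    (∀ x ∈ C, q.toCM x = (pSphere N).pt) ∧
    Set.InjOn q.toCM Cᶜ ∧
    (∀ x ∈ Cᶜ, q.toCM x ≠ (pSphere N).pt) ∧
    Nonempty (Homeomorph (↥(Cᶜ)) (↥(Metric.ball (0 : EuclideanSpace ℝ (Fin N)) 1)))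

/-- the total dimension of the rational homotopy of `X` (for a `1`-connected finite
`H`-space this is its rank) -/
def ratHomotopyRank (X : PtSpace) : ℕ :=
  ∑ᶠ n : ℕ,
    Module.finrank ℚ
      (ℚ ⊗[ℤ] Additive (HomotopyGroup (Fin (n + 2)) X.carrier X.pt))

/-- `E` is an Eilenberg–MacLane space `K(ℚ, m)` (`m ≥ 1`): path-connected, `π_m(E) ≅ ℚ`
and all other homotopy groups vanish. -/
def IsEMRat (E : PtSpace) (m : ℕ) : Prop :=
  1 ≤ m ∧
  (∀ i : ℕ, 1 ≤ i → i ≠ m → ∀ g : PtMap (pSphere i) E, PtNullhomotopic g) ∧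
  PathConnectedSpace E.carrier ∧
  Nonempty (HomotopyGroup (Fin (m - 1 + 1)) E.carrier E.pt ≃* Multiplicative ℚ)

/-- `S³`, realized as the unit quaternions (a topological group) -/
abbrev qS3 : PtSpace := PtSpace.of (Metric.sphere (0 : Quaternion ℝ) 1) 1

/-- `S³ × S⁷ × S¹¹` -/
abbrev X15 : PtSpace := PtSpace.prod qS3 (PtSpace.prod (pSphere 7) (pSphere 11))

/-- the projection `S³ × S⁷ × S¹¹ → S³ × S¹¹` forgetting the `S⁷` factor -/
def projForget : PtMap X15 (PtSpace.prod qS3 (pSphere 11)) :=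
  ⟨⟨fun p => (p.1, p.2.2), by fun_prop⟩, rfl⟩

/-- the inclusion `S³ → S³ × S⁷ × S¹¹` of the first factor -/
def inclS3 : PtMap qS3 X15 :=
  ⟨⟨fun s => (s, ((pSphere 7).pt, (pSphere 11).pt)), by fun_prop⟩, rfl⟩

/-!
For `g : Sⁱ → S³ × S⁷ × S¹¹` the composite `F ∘ g` factors through `x ↦ [a x, b x] ∈ S³ ∧ S¹¹`,
which is nullhomotopic for `i ≥ 1`: deform the identity of `Sⁱ` so that `b` dies on one cap and
`a` is constant on the complementary cap, then use the group structure of `S³` to straighten `a`.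
On the other hand a nullhomotopy of `F` restricts to one of `α ∘ (S³ × S¹¹ → S³ ∧ S¹¹)`; since
`S³` is a group it can be corrected to be trivial on the wedge, so it descends to a
nullhomotopy of `α`.
-/

open unitInterval

namespace PtMap

@[fun_prop]
theorem continuous {X Y : PtSpace} (f : PtMap X Y) : Continuous f := f.toCM.continuous

@[simp]
theorem apply_pt {X Y : PtSpace} (f : PtMap X Y) : f X.pt = Y.pt := f.map_pt

def fst {X Y : PtSpace} : PtMap (X.prod Y) X := ⟨⟨Prod.fst, continuous_fst⟩, rfl⟩

def snd {X Y : PtSpace} : PtMap (X.prod Y) Y := ⟨⟨Prod.snd, continuous_snd⟩, rfl⟩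

def prodMk {S X Y : PtSpace} (a : PtMap S X) (b : PtMap S Y) : PtMap S (X.prod Y) :=
  ⟨⟨fun x => (a x, b x), by fun_prop⟩, show (a S.pt, b S.pt) = (X.pt, Y.pt) by simp⟩

end PtMap

def smashPair {S X Y : PtSpace} (a : PtMap S X) (b : PtMap S Y) : PtMap S (ptSmash X Y) :=
  (ptSmashProj X Y).comp (a.prodMk b)

theorem PtHomotopic.of_continuous {X Y : PtSpace} {f g : PtMap X Y} (H : I × X → Y)
    (hH : Continuous H) (h₀ : ∀ x, H (0, x) = f x) (h₁ : ∀ x, H (1, x) = g x)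
    (hpt : ∀ t, H (t, X.pt) = Y.pt) : PtHomotopic f g :=
  ⟨{ toFun := H
     continuous_toFun := hH
     map_zero_left := h₀
     map_one_left := h₁
     prop' := fun t x hx => by
       rw [Set.mem_singleton_iff.mp hx]
       exact (hpt t).trans f.map_pt.symm }⟩

theorem PtNullhomotopic.comp_left {X Y Z : PtSpace} {f : PtMap X Y} (h : PtNullhomotopic f)
    (p : PtMap Y Z) : PtNullhomotopic (p.comp f) := by
  have hconst : p.comp (PtMap.const X Y) = PtMap.const X Z :=
    PtMap.ext (ContinuousMap.ext fun _ => p.map_pt)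
  simpa only [PtNullhomotopic, hconst] using h.compLeft p

theorem PtNullhomotopic.comp_right {X Y Z : PtSpace} {f : PtMap Y Z} (h : PtNullhomotopic f)
    (q : PtMap X Y) : PtNullhomotopic (f.comp q) :=
  h.compRight q

theorem PtNullhomotopic.of_comp_homeomorph {X Y Z : PtSpace} {f : PtMap Y Z} (e : X ≃ₜ Y)
    (he : e X.pt = Y.pt) (h : PtNullhomotopic (f.comp ⟨⟨e, e.continuous⟩, he⟩)) :
    PtNullhomotopic f := by
  have he_symm : e.symm Y.pt = X.pt := by rw [← he, e.symm_apply_apply]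
  have hcomp := h.comp_right ⟨⟨e.symm, e.symm.continuous⟩, he_symm⟩
  have hf : (f.comp ⟨⟨e, e.continuous⟩, he⟩).comp ⟨⟨e.symm, e.symm.continuous⟩, he_symm⟩ = f :=
    PtMap.ext <| ContinuousMap.ext fun y => congrArg f (e.apply_symm_apply y)
  rwa [hf] at hcomp

theorem PtHomotopic.prodMk {S X Y : PtSpace} {a a' : PtMap S X} {b b' : PtMap S Y}
    (ha : PtHomotopic a a') (hb : PtHomotopic b b') :
    PtHomotopic (a.prodMk b) (a'.prodMk b') := by
  obtain ⟨Ha⟩ := ha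
  obtain ⟨Hb⟩ := hb
  exact .of_continuous (fun p => (Ha p, Hb p)) (by fun_prop)
    (fun x => Prod.ext (Ha.apply_zero x) (Hb.apply_zero x))
    (fun x => Prod.ext (Ha.apply_one x) (Hb.apply_one x))
    (fun t => Prod.ext ((Ha.eq_fst t rfl).trans a.map_pt) ((Hb.eq_fst t rfl).trans b.map_pt))

theorem ptSmashProj_eq_pt {X Y : PtSpace} {z : X.prod Y} (h : z.1 = X.pt ∨ z.2 = Y.pt) :
    ptSmashProj X Y z = (ptSmash X Y).pt :=
  Quot.sound ⟨h, Or.inl rfl⟩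

theorem smashPair_eq_const {S X Y : PtSpace} {a : PtMap S X} {b : PtMap S Y}
    (h : ∀ x, a x = X.pt ∨ b x = Y.pt) : smashPair a b = PtMap.const S (ptSmash X Y) :=
  PtMap.ext <| ContinuousMap.ext fun x => ptSmashProj_eq_pt (h x)

theorem smashPair_nullhomotopic {S X Y : PtSpace} {a a' : PtMap S X} {b b' : PtMap S Y}
    (ha : PtHomotopic a a') (hb : PtHomotopic b b') (h : ∀ x, a' x = X.pt ∨ b' x = Y.pt) :
    PtNullhomotopic (smashPair a b) := by
  have := (ha.prodMk hb).compLeft (ptSmashProj X Y)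
  rwa [← smashPair, ← smashPair, smashPair_eq_const h] at this

section TopologicalGroup

variable {G : Type} [TopologicalSpace G] [Group G] [IsTopologicalGroup G]

/-- A nullhomotopy `K` of `w ∘ π` is corrected to `K(t, x₀, y)⁻¹ K(t, x, y) K(t, x, y₀)⁻¹`,
which is trivial on the wedge and therefore descends to `X ∧ Y`. -/
theorem PtNullhomotopic.of_comp_ptSmashProj {X Y : PtSpace}
    {w : PtMap (ptSmash X Y) (PtSpace.of G 1)}
    (h : PtNullhomotopic (w.comp (ptSmashProj X Y))) : PtNullhomotopic w := by
  obtain ⟨K⟩ := h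
  let k : C(I × (X.carrier × Y.carrier), G) := K.toContinuousMap
  have hk_zero : ∀ z, k (0, z) = w (ptSmashProj X Y z) := K.apply_zero
  have hk_one : ∀ z, k (1, z) = 1 := K.apply_one
  have hk_pt : ∀ t, k (t, (X.pt, Y.pt)) = 1 := fun t => (K.eq_fst t rfl).trans w.map_pt
  let L : I × (X.carrier × Y.carrier) → G := fun p =>
    (k (p.1, (X.pt, p.2.2)))⁻¹ * k p * (k (p.1, (p.2.1, Y.pt)))⁻¹
  have hL_wedge : ∀ t z, z.1 = X.pt ∨ z.2 = Y.pt → L (t, z) = 1 := by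
    rintro t ⟨x, y⟩ (rfl | rfl) <;> simp [L, hk_pt]
  let N : I × ptSmash X Y → G := fun p =>
    Quot.lift (fun z => L (p.1, z))
      (fun z z' hzz' => by rw [hL_wedge _ _ hzz'.1, hL_wedge _ _ hzz'.2]) p.2
  refine .of_continuous N ?_ ?_ ?_ ?_
  · refine isQuotientMap_quot_mk.continuous_lift_prod_right ?_
    show Continuous L
    fun_prop
  · rintro ⟨z⟩
    show L (0, z) = w (ptSmashProj X Y z)
    have hw_wedge : ∀ z : X.carrier × Y.carrier, z.1 = X.pt ∨ z.2 = Y.pt →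
        w (ptSmashProj X Y z) = 1 :=
      fun z hz => (congrArg w (ptSmashProj_eq_pt hz)).trans w.map_pt
    simp [L, hk_zero, hw_wedge]
  · rintro ⟨z⟩
    show L (1, z) = 1
    simp [L, hk_one]
  · intro t
    exact hL_wedge t _ (Or.inl rfl)

end TopologicalGroup

section Sphere

open Metric

section Slide

variable {E : Type} [NormedAddCommGroup E] [NormedSpace ℝ E]

theorem sub_smul_add_smul_ne_zero {x v : E} (hx : ‖x‖ = 1) (hv : ‖v‖ = 1) {c : ℝ}
    (hc₀ : 0 ≤ c) (hc₁ : c ≤ 1) (h : x = -v → c = 0) : (1 - c) • x + c • v ≠ 0 := by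
  intro hzero
  have hxv : (1 - c) • x = c • -v := by rw [smul_neg]; exact eq_neg_of_add_eq_zero_left hzero
  have hc : c = 1 / 2 := by
    have := congrArg norm hxv
    rw [norm_smul, norm_smul, norm_neg, hx, hv, Real.norm_of_nonneg (by linarith),
      Real.norm_of_nonneg hc₀] at this
    linarith
  rw [hc] at hxv
  have hx_neg : x = -v :=
    smul_right_injective E (by norm_num : (1 : ℝ) / 2 ≠ 0) (by convert hxv using 2; norm_num)
  linarith [h hx_neg]

variable (v : sphere (0 : E) 1) (φ : C(sphere (0 : E) 1, I))

def slideChord (p : I × sphere (0 : E) 1) : E :=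
  (1 - (p.1 * φ p.2 : ℝ)) • (p.2 : E) + (p.1 * φ p.2 : ℝ) • (v : E)

theorem slideChord_ne_zero (hφ : φ (-v) = 0) (p : I × sphere (0 : E) 1) :
    slideChord v φ p ≠ 0 := by
  refine sub_smul_add_smul_ne_zero (norm_eq_of_mem_sphere p.2) (norm_eq_of_mem_sphere v)
    (mul_nonneg p.1.2.1 (φ p.2).2.1) (mul_le_one₀ p.1.2.2 (φ p.2).2.1 (φ p.2).2.2) fun h => ?_
  rw [show p.2 = -v from Subtype.ext h, hφ]
  simp

def sphereSlide (hφ : φ (-v) = 0) : C(I × sphere (0 : E) 1, sphere (0 : E) 1) where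
  toFun p := ⟨‖slideChord v φ p‖⁻¹ • slideChord v φ p, by
    rw [mem_sphere_zero_iff_norm, norm_smul, norm_inv, norm_norm,
      inv_mul_cancel₀ (norm_ne_zero_iff.mpr (slideChord_ne_zero v φ hφ p))]⟩
  continuous_toFun := by
    have hchord : Continuous (slideChord v φ) := by unfold slideChord; fun_prop
    exact ((hchord.norm.inv₀ fun p => norm_ne_zero_iff.mpr (slideChord_ne_zero v φ hφ p)).smul
      hchord).subtype_mk _

variable {v φ}

theorem sphereSlide_eq_of_slideChord_eq (hφ : φ (-v) = 0) {p : I × sphere (0 : E) 1}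
    {u : sphere (0 : E) 1} (h : slideChord v φ p = u) : sphereSlide v φ hφ p = u :=
  Subtype.ext <| by simp [sphereSlide, h, norm_eq_of_mem_sphere u]

theorem sphereSlide_of_mul_eq_zero (hφ : φ (-v) = 0) {t : I} {x : sphere (0 : E) 1}
    (h : (t * φ x : ℝ) = 0) : sphereSlide v φ hφ (t, x) = x :=
  sphereSlide_eq_of_slideChord_eq hφ (by simp [slideChord, h])

theorem sphereSlide_zero (hφ : φ (-v) = 0) (x : sphere (0 : E) 1) :
    sphereSlide v φ hφ (0, x) = x :=
  sphereSlide_of_mul_eq_zero hφ (by simp)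

theorem sphereSlide_of_eq_zero (hφ : φ (-v) = 0) (t : I) {x : sphere (0 : E) 1} (hx : φ x = 0) :
    sphereSlide v φ hφ (t, x) = x :=
  sphereSlide_of_mul_eq_zero hφ (by simp [hx])

theorem sphereSlide_self (hφ : φ (-v) = 0) (t : I) : sphereSlide v φ hφ (t, v) = v :=
  sphereSlide_eq_of_slideChord_eq hφ (by simp [slideChord, ← add_smul])

theorem sphereSlide_one (hφ : φ (-v) = 0) {x : sphere (0 : E) 1} (hx : φ x = 1) :
    sphereSlide v φ hφ (1, x) = v :=
  sphereSlide_eq_of_slideChord_eq hφ (by simp [slideChord, hx])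

end Slide

section Bump

variable {E : Type} [NormedAddCommGroup E] [InnerProductSpace ℝ E] (v : sphere (0 : E) 1)

def southBump : C(sphere (0 : E) 1, I) :=
  ⟨fun x => Set.projIcc 0 1 zero_le_one (-2 * inner ℝ (x : E) (v : E)), by fun_prop⟩

def northBump : C(sphere (0 : E) 1, I) :=
  ⟨fun x => Set.projIcc 0 1 zero_le_one (2 * inner ℝ (x : E) (v : E) + 2), by fun_prop⟩

theorem southBump_self : southBump v v = 0 :=
  Set.projIcc_of_le_left zero_le_one (by simp)

theorem northBump_neg : northBump v (-v) = 0 :=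
  Set.projIcc_of_le_left zero_le_one (by simp)

theorem southBump_eq_one_or_northBump_eq_one (x : sphere (0 : E) 1) :
    southBump v x = 1 ∨ northBump v x = 1 := by
  rcases le_total (inner ℝ (x : E) (v : E)) (-1 / 2) with h | h
  · exact Or.inl (Set.projIcc_of_right_le zero_le_one (by linarith))
  · exact Or.inr (Set.projIcc_of_right_le zero_le_one (by linarith))

end Bump

section Deform

variable {E : Type} [NormedAddCommGroup E] [InnerProductSpace ℝ E] {v : sphere (0 : E) 1}

/-- Slide the southern cap onto `-v`, then untwist `a` along a path from `v` to `-v`. -/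
theorem exists_homotopic_eq_one_of_southBump_eq_one (hE : 1 < Module.rank ℝ E)
    {G : Type} [TopologicalSpace G] [Group G] [IsTopologicalGroup G]
    (a : PtMap (PtSpace.of (sphere (0 : E) 1) v) (PtSpace.of G 1)) :
    ∃ a' : PtMap (PtSpace.of (sphere (0 : E) 1) v) (PtSpace.of G 1),
      PtHomotopic a a' ∧ ∀ x, southBump v x = 1 → a' x = 1 := by
  have ha : Continuous (a : sphere (0 : E) 1 → G) := a.continuous
  have ha_pt : a v = 1 := a.map_pt
  have hsouth : southBump v (-(-v)) = 0 := by rw [neg_neg, southBump_self]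
  let M := sphereSlide (-v) (southBump v) hsouth
  have hM_pt : ∀ t, M (t, v) = v := fun t => sphereSlide_of_eq_zero hsouth t (southBump_self v)
  have : PathConnectedSpace (sphere (0 : E) 1) :=
    isPathConnected_iff_pathConnectedSpace.mp (isPathConnected_sphere hE 0 zero_le_one)
  let γ := PathConnectedSpace.somePath v (-v)
  refine ⟨⟨⟨fun x => a (M (1, x)) * (a (γ (southBump v x)))⁻¹, by fun_prop⟩, by
      show a (M (1, v)) * (a (γ (southBump v v)))⁻¹ = 1
      rw [hM_pt, southBump_self, γ.source, mul_inv_cancel]⟩, ?_, fun x hx => ?_⟩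
  · exact .of_continuous (fun p => a (M p) * (a (γ (p.1 * southBump v p.2)))⁻¹) (by fun_prop)
      (fun x => by simp [M, sphereSlide_zero, ha_pt]) (fun x => by rw [one_mul]; rfl)
      (fun t => by simp [hM_pt, southBump_self, ha_pt])
  · show a (M (1, x)) * (a (γ (southBump v x)))⁻¹ = 1
    rw [sphereSlide_one hsouth hx, hx, γ.target, mul_inv_cancel]

theorem exists_homotopic_eq_pt_of_northBump_eq_one {Y : PtSpace}
    (b : PtMap (PtSpace.of (sphere (0 : E) 1) v) Y) :
    ∃ b' : PtMap (PtSpace.of (sphere (0 : E) 1) v) Y,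
      PtHomotopic b b' ∧ ∀ x, northBump v x = 1 → b' x = Y.pt := by
  have hb : Continuous (b : sphere (0 : E) 1 → Y) := b.continuous
  have hb_pt : b v = Y.pt := b.map_pt
  let L := sphereSlide v (northBump v) (northBump_neg v)
  refine ⟨⟨⟨fun x => b (L (1, x)), by fun_prop⟩, by
      show b (L (1, v)) = Y.pt
      rw [sphereSlide_self, hb_pt]⟩, ?_, fun x hx => ?_⟩
  · exact .of_continuous (fun p => b (L p)) (by fun_prop) (fun x => by simp [L, sphereSlide_zero])
      (fun x => rfl) (fun t => by simp [L, sphereSlide_self, hb_pt])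
  · exact (congrArg b (sphereSlide_one (northBump_neg v) hx)).trans hb_pt

theorem smashPair_nullhomotopic_of_sphere (hE : 1 < Module.rank ℝ E)
    {G : Type} [TopologicalSpace G] [Group G] [IsTopologicalGroup G] {Y : PtSpace}
    (a : PtMap (PtSpace.of (sphere (0 : E) 1) v) (PtSpace.of G 1))
    (b : PtMap (PtSpace.of (sphere (0 : E) 1) v) Y) : PtNullhomotopic (smashPair a b) := by
  obtain ⟨a', ha, ha'⟩ := exists_homotopic_eq_one_of_southBump_eq_one hE a
  obtain ⟨b', hb, hb'⟩ := exists_homotopic_eq_pt_of_northBump_eq_one b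
  refine smashPair_nullhomotopic ha hb fun x => ?_
  rcases southBump_eq_one_or_northBump_eq_one v x with h | h
  exacts [Or.inl (ha' x h), Or.inr (hb' x h)]

theorem smashPair_nullhomotopic_of_pSphere (n : ℕ) {G : Type} [TopologicalSpace G] [Group G]
    [IsTopologicalGroup G] {Y : PtSpace} (a : PtMap (pSphere (n + 1)) (PtSpace.of G 1))
    (b : PtMap (pSphere (n + 1)) Y) : PtNullhomotopic (smashPair a b) :=
  smashPair_nullhomotopic_of_sphere
    (by rw [← Module.finrank_eq_rank, finrank_euclideanSpace_fin]; norm_cast; omega) a b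

end Deform

end Sphere

theorem stmt_15_general (α : PtMap (pSphere 14) qS3)
    (hα₁ : ¬ PtNullhomotopic α)
    (e : (ptSmash qS3 (pSphere 11)).carrier ≃ₜ (pSphere 14).carrier)
    (he : e (ptSmash qS3 (pSphere 11)).pt = (pSphere 14).pt) :
    ¬ PtNullhomotopic (inclS3.comp (α.comp
        ((⟨(⟨e, e.continuous⟩ :
            C((ptSmash qS3 (pSphere 11)).carrier, (pSphere 14).carrier)).comp
          (ptSmashProj qS3 (pSphere 11)).toCM, he⟩ :
            PtMap (PtSpace.prod qS3 (pSphere 11)) (pSphere 14)).comp projForget))) ∧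
    (inclS3.comp (α.comp
        ((⟨(⟨e, e.continuous⟩ :
            C((ptSmash qS3 (pSphere 11)).carrier, (pSphere 14).carrier)).comp
          (ptSmashProj qS3 (pSphere 11)).toCM, he⟩ :
            PtMap (PtSpace.prod qS3 (pSphere 11)) (pSphere 14)).comp projForget)))
      ∈ ZSet ⊤ X15 := by
  let e' : PtMap (ptSmash qS3 (pSphere 11)) (pSphere 14) := ⟨⟨e, e.continuous⟩, he⟩
  constructor
  · intro hF
    -- restrict `F` to `S³ × * × S¹¹` and project to `S³`: this is `α ∘ e ∘ π`
    refine hα₁ (.of_comp_homeomorph e he (.of_comp_ptSmashProj ?_))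
    exact (hF.comp_left PtMap.fst).comp_right
      (PtMap.fst.prodMk ((PtMap.const _ (pSphere 7)).prodMk PtMap.snd))
  · rintro (_ | k) hk - g
    · omega
    · exact (smashPair_nullhomotopic_of_pSphere k (PtMap.fst.comp g)
        (PtMap.snd.comp (PtMap.snd.comp g))).comp_left (inclS3.comp (α.comp e'))

theorem stmt_15 (α : PtMap (pSphere 14) qS3)
    (hα₁ : ¬ PtNullhomotopic α) (hα₂ : PtNullhomotopic (α.npow 7))
    (e : (ptSmash qS3 (pSphere 11)).carrier ≃ₜ (pSphere 14).carrier)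
    (he : e (ptSmash qS3 (pSphere 11)).pt = (pSphere 14).pt) :
    ¬ PtNullhomotopic (inclS3.comp (α.comp
        ((⟨(⟨e, e.continuous⟩ :
            C((ptSmash qS3 (pSphere 11)).carrier, (pSphere 14).carrier)).comp
          (ptSmashProj qS3 (pSphere 11)).toCM, he⟩ :
            PtMap (PtSpace.prod qS3 (pSphere 11)) (pSphere 14)).comp projForget))) ∧
    (inclS3.comp (α.comp
        ((⟨(⟨e, e.continuous⟩ :
            C((ptSmash qS3 (pSphere 11)).carrier, (pSphere 14).carrier)).comp
          (ptSmashProj qS3 (pSphere 11)).toCM, he⟩ :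
            PtMap (PtSpace.prod qS3 (pSphere 11)) (pSphere 14)).comp projForget)))
      ∈ ZSet ⊤ X15 :=
  stmt_15_general α hα₁ e he
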